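/- If two reduction relations R₁ and R₂ satisfy the local commutation property — whenever t₀ →_{R₂} t₁ and t₀ →_{R₁} t₂ there exists t₃ with t₁ →*_{R₁} t₃ and t₂ →^{=}_{R₂} t₃ (i.e., zero or one R₂-step) — then R₁ and R₂ commute: whenever t₀ →*_{R₂} t₁ and t₀ →*_{R₁} t₂ there exists t₃ with t₁ →*_{R₁} t₃ and t₂ →*_{R₂} t₃. -/

import Mathlib

/-! Strip lemma first: a single `R₂`-step against an `R₁`-reduction of any length closes with an
`R₁`-reduction and at most one `R₂`-step, by induction on the `R₁`-reduction; the "at most one"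
is what keeps the induction from growing the `R₂` side. Induction on the `R₂`-reduction, stripping
off one step at a time, then gives commutation. -/

open Relation

section

variable {α : Type*} {R₁ R₂ : α → α → Prop}

theorem exists_reflTransGen_reflGen_of_step_of_reflTransGen
    (h : ∀ t₀ t₁ t₂, R₂ t₀ t₁ → R₁ t₀ t₂ → ∃ t₃, ReflTransGen R₁ t₁ t₃ ∧ ReflGen R₂ t₂ t₃)
    {a b c : α} (hab : R₂ a b) (hac : ReflTransGen R₁ a c) :
    ∃ d, ReflTransGen R₁ b d ∧ ReflGen R₂ c d := by
  induction hac with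
  | refl => exact ⟨b, .refl, .single hab⟩
  | tail _ hcc' ih =>
    obtain ⟨d, hbd, hcd⟩ := ih
    cases hcd with
    | refl => exact ⟨_, hbd.tail hcc', .refl⟩
    | single hcd =>
      obtain ⟨e, hde, hc'e⟩ := h _ _ _ hcd hcc'
      exact ⟨e, hbd.trans hde, hc'e⟩

end

/-- If whenever t₀ →_{R₂} t₁ and t₀ →_{R₁} t₂ there is t₃ with
t₁ →*_{R₁} t₃ and t₂ →^=_{R₂} t₃ (zero or one R₂-step), then R₁ and R₂ commute. -/
theorem local_commutation_implies_commutation {α : Type*} (R₁ R₂ : α → α → Prop)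
    (h : ∀ t₀ t₁ t₂, R₂ t₀ t₁ → R₁ t₀ t₂ →
      ∃ t₃, Relation.ReflTransGen R₁ t₁ t₃ ∧ Relation.ReflGen R₂ t₂ t₃) :
    ∀ t₀ t₁ t₂, Relation.ReflTransGen R₂ t₀ t₁ → Relation.ReflTransGen R₁ t₀ t₂ →
      ∃ t₃, Relation.ReflTransGen R₁ t₁ t₃ ∧ Relation.ReflTransGen R₂ t₂ t₃ := by
  intro t₀ t₁ t₂ h₂ h₁
  induction h₂ generalizing t₂ with
  | refl => exact ⟨t₂, h₁, .refl⟩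
  | tail _ hstep ih =>
    obtain ⟨u, hu₁, hu₂⟩ := ih t₂ h₁
    obtain ⟨v, hv₁, hv₂⟩ := exists_reflTransGen_reflGen_of_step_of_reflTransGen h hstep hu₁
    exact ⟨v, hv₁, hu₂.trans hv₂.to_reflTransGen⟩
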